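/- Let K be a field of characteristic p > 0 and f_1,...,f_k ∈ K[X]. Then f_1,...,f_k are linearly independent over the subring K[X^p] if and only if their Wronskian W(f_1,...,f_k) is nonzero. -/

import Mathlib

open Polynomial

noncomputable def wronskian {K : Type*} [Field K] {k : ℕ} (f : Fin k → K[X]) : K[X] :=
  Matrix.det (Matrix.of fun i j : Fin k => (derivative^[(i : ℕ)] (f j)))

/-!
In characteristic `p`, `K[X^p]` is exactly the kernel of `d/dX`, so the theorem is the
polynomial case of "the Wronskian vanishes iff there is a linear relation over the constants".

A relation `∑ bⱼ fⱼ = 0` with constant `bⱼ` can be differentiated repeatedly, so `b` lies in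
the kernel of the Wronskian matrix. Conversely, induct on `k`. If the Wronskian of
`f₀, …, f_{k-2}` is nonzero, choose a nonzero kernel vector `v` of the Wronskian matrix of `f`;
its last entry `c` is nonzero. Differentiating `∑ fⱼ⁽ⁱ⁾ vⱼ = 0` shows that the vector
`Polynomial.wronskian c vⱼ = c vⱼ' - c' vⱼ` is killed by the first `k - 1` rows, and its last
entry is `0`, hence it vanishes: every `vⱼ / c` is a constant. Clearing denominators with
`c ^ p` (itself a constant) gives `bⱼ = vⱼ c ^ (p - 1)`.
-/

open Matrix

namespace Polynomial

variable {R : Type*} [CommRing R]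

theorem exists_comp_X_pow_iff_derivative_eq_zero [NoZeroDivisors R] {p : ℕ} [CharP R p]
    (hp : p ≠ 0) {b : R[X]} : (∃ c : R[X], b = c.comp (X ^ p)) ↔ derivative b = 0 := by
  constructor
  · rintro ⟨c, rfl⟩
    rw [← expand_eq_comp_X_pow, derivative_expand, ← C_eq_natCast, CharP.cast_eq_zero, C_0,
      zero_mul, mul_zero]
  · intro hb
    exact ⟨contract p b, (expand_contract p hb hp).symm⟩

theorem derivative_mul_pow_sub_one_eq_zero [NoZeroDivisors R] {p : ℕ} [CharP R p] (hp : p.Prime)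
    {a c : R[X]} (hc : c ≠ 0) (h : wronskian c a = 0) : derivative (a * c ^ (p - 1)) = 0 := by
  obtain ⟨q, rfl⟩ : ∃ q, p = q + 2 := ⟨p - 2, by have := hp.two_le; omega⟩
  have hq : C ((q : R) + 1) = -1 := by
    have : ((q + 2 : ℕ) : R) = 0 := CharP.cast_eq_zero R _
    push_cast at this
    rw [eq_neg_iff_add_eq_zero, ← C_1, ← C_add, add_assoc, one_add_one_eq_two, this, C_0]
  refine (mul_eq_zero.mp ?_).resolve_left hc
  rw [show q + 2 - 1 = q + 1 by omega, derivative_mul, derivative_pow_succ, hq]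
  unfold wronskian at h
  linear_combination c ^ (q + 1) * h

end Polynomial

theorem Matrix.eq_zero_of_mulVec_castSucc_eq_zero {R : Type*} [CommRing R] [NoZeroDivisors R]
    {n : ℕ} {M : Matrix (Fin (n + 1)) (Fin (n + 1)) R}
    (hM : (M.submatrix Fin.castSucc Fin.castSucc).det ≠ 0) {w : Fin (n + 1) → R}
    (hlast : w (Fin.last n) = 0) (hw : ∀ i : Fin n, (M *ᵥ w) i.castSucc = 0) : w = 0 := by
  have hsub : M.submatrix Fin.castSucc Fin.castSucc *ᵥ (w ∘ Fin.castSucc) = 0 := by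
    funext i
    rw [Pi.zero_apply, ← hw i]
    simp [mulVec, dotProduct, Fin.sum_univ_castSucc, hlast]
  have hinit := eq_zero_of_mulVec_eq_zero hM hsub
  funext j
  induction j using Fin.lastCases with
  | last => exact hlast
  | cast i => exact congrFun hinit i

section WronskianMatrix

variable {R : Type*} [CommRing R]

noncomputable def wronskianMatrix {k : ℕ} (f : Fin k → R[X]) : Matrix (Fin k) (Fin k) R[X] :=
  of fun i j => derivative^[(i : ℕ)] (f j)

theorem wronskian_eq_det_wronskianMatrix {K : Type*} [Field K] {k : ℕ} (f : Fin k → K[X]) :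
    wronskian f = (wronskianMatrix f).det :=
  rfl

theorem wronskianMatrix_submatrix_castSucc {n : ℕ} (f : Fin (n + 1) → R[X]) :
    (wronskianMatrix f).submatrix Fin.castSucc Fin.castSucc = wronskianMatrix (f ∘ Fin.castSucc) :=
  rfl

theorem wronskianMatrix_mulVec_eq_zero {k : ℕ} {f b : Fin k → R[X]}
    (hb : ∀ j, derivative (b j) = 0) (h : ∑ j, b j * f j = 0) : wronskianMatrix f *ᵥ b = 0 := by
  suffices ∀ m : ℕ, ∑ j, derivative^[m] (f j) * b j = 0 from funext fun i => this i
  intro m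
  induction m with
  | zero => simpa [mul_comm] using h
  | succ m ih =>
    simpa only [Function.iterate_succ_apply', map_sum, derivative_mul, hb, mul_zero, add_zero,
      map_zero] using congrArg derivative ih

theorem wronskianMatrix_mulVec_derivative {n : ℕ} (f v : Fin (n + 1) → R[X]) (i : Fin n) :
    (wronskianMatrix f *ᵥ fun j => derivative (v j)) i.castSucc =
      derivative ((wronskianMatrix f *ᵥ v) i.castSucc) - (wronskianMatrix f *ᵥ v) i.succ := by
  simp only [wronskianMatrix, mulVec, dotProduct, of_apply, map_sum,
    derivative_mul, Fin.val_succ, Fin.val_castSucc, Function.iterate_succ_apply',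
    Finset.sum_add_distrib]
  ring

theorem wronskianMatrix_mulVec_wronskian_eq_zero {n : ℕ} {f v : Fin (n + 1) → R[X]}
    (hv : wronskianMatrix f *ᵥ v = 0) (i : Fin n) :
    (wronskianMatrix f *ᵥ fun j => Polynomial.wronskian (v (Fin.last n)) (v j)) i.castSucc = 0 := by
  have hsplit : (fun j => Polynomial.wronskian (v (Fin.last n)) (v j)) =
      v (Fin.last n) • (fun j => derivative (v j)) - derivative (v (Fin.last n)) • v := by
    funext j
    simp [Polynomial.wronskian]
  rw [hsplit, mulVec_sub, mulVec_smul, mulVec_smul, Pi.sub_apply,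
    Pi.smul_apply, Pi.smul_apply, wronskianMatrix_mulVec_derivative, hv]
  simp

variable [IsDomain R] {p : ℕ} [CharP R p]

theorem exists_const_relation_of_det_castSucc_ne_zero (hp : p.Prime) {n : ℕ}
    {f : Fin (n + 1) → R[X]} (hW : (wronskianMatrix f).det = 0)
    (hW' : (wronskianMatrix (f ∘ Fin.castSucc)).det ≠ 0) :
    ∃ b : Fin (n + 1) → R[X], b ≠ 0 ∧ (∀ j, derivative (b j) = 0) ∧ ∑ j, b j * f j = 0 := by
  rw [← wronskianMatrix_submatrix_castSucc] at hW'
  obtain ⟨v, hv0, hv⟩ := exists_mulVec_eq_zero_iff.mpr hW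
  set c := v (Fin.last n)
  have hc : c ≠ 0 := fun hc =>
    hv0 (eq_zero_of_mulVec_castSucc_eq_zero hW' hc fun i => by rw [hv, Pi.zero_apply])
  have hconst : ∀ j, Polynomial.wronskian c (v j) = 0 := congrFun <|
    eq_zero_of_mulVec_castSucc_eq_zero hW' (wronskian_self_eq_zero c)
      (wronskianMatrix_mulVec_wronskian_eq_zero hv)
  refine ⟨fun j => v j * c ^ (p - 1), fun h => ?_,
    fun j => derivative_mul_pow_sub_one_eq_zero hp hc (hconst j), ?_⟩
  · have hlast : c * c ^ (p - 1) = 0 := congrFun h (Fin.last n)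
    exact hc (pow_eq_zero_iff (n := p) hp.ne_zero |>.mp <| by
      rwa [← pow_succ', Nat.sub_add_cancel hp.one_le] at hlast)
  · have hrow : ∑ j, f j * v j = 0 := by
      simpa [wronskianMatrix, mulVec, dotProduct] using congrFun hv 0
    calc ∑ j, v j * c ^ (p - 1) * f j = (∑ j, f j * v j) * c ^ (p - 1) := by
          rw [Finset.sum_mul]
          exact Finset.sum_congr rfl fun j _ => by ring
      _ = 0 := by rw [hrow, zero_mul]

theorem exists_const_relation_of_det_wronskianMatrix_eq_zero (hp : p.Prime) :
    ∀ {k : ℕ} {f : Fin k → R[X]}, (wronskianMatrix f).det = 0 →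
      ∃ b : Fin k → R[X], b ≠ 0 ∧ (∀ j, derivative (b j) = 0) ∧ ∑ j, b j * f j = 0
  | 0, _, hW => by simp at hW
  | n + 1, f, hW => by
    by_cases hW' : (wronskianMatrix (f ∘ Fin.castSucc)).det = 0
    · obtain ⟨b, hb0, hb, hrel⟩ := exists_const_relation_of_det_wronskianMatrix_eq_zero hp hW'
      refine ⟨Fin.snoc b 0, fun h => hb0 ?_, fun j => ?_, ?_⟩
      · funext i
        simpa using congrFun h i.castSucc
      · induction j using Fin.lastCases <;> simp [hb]
      · simpa [Fin.sum_univ_castSucc] using hrel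
    · exact exists_const_relation_of_det_castSucc_ne_zero hp hW hW'

end WronskianMatrix

theorem stmt14 {K : Type*} [Field K] (p : ℕ) (hp : p.Prime) [CharP K p]
    {k : ℕ} (f : Fin k → K[X]) :
    (∀ b : Fin k → K[X], (∀ j, ∃ c : K[X], b j = c.comp (X ^ p)) →
        (∑ j, b j * f j) = 0 → ∀ j, b j = 0) ↔ wronskian f ≠ 0 := by
  simp only [exists_comp_X_pow_iff_derivative_eq_zero hp.ne_zero, wronskian_eq_det_wronskianMatrix]
  constructor
  · intro hindep hW
    obtain ⟨b, hb0, hb, hrel⟩ := exists_const_relation_of_det_wronskianMatrix_eq_zero hp hW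
    exact hb0 (funext (hindep b hb hrel))
  · intro hW b hb hrel
    exact congrFun (eq_zero_of_mulVec_eq_zero hW (wronskianMatrix_mulVec_eq_zero hb hrel))
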